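/- (Theorem 3, non-increasing part.) Under any r-csmGmm, for every dimension k ∈ {1,...,K}, if all coordinates of the test-statistic vector are positive, the replication local false discovery rate is non-increasing in the k-th coordinate: if z, z' ∈ ℝ^K satisfy z_{k'} = z'_{k'} > 0 for all k' ≠ k and 0 < z_k ≤ z'_k, then lfdr^rep(z') ≤ lfdr^rep(z). -/
import Mathlib


noncomputable section

open Finset

/-- The standard normal density `φ(x) = (2π)^{-1/2} exp(-x²/2)`. -/
def stdNormal (x : ℝ) : ℝ := (Real.sqrt (2 * Real.pi))⁻¹ * Real.exp (-(x ^ 2) / 2)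

lemma stdNormal_pos (x : ℝ) : 0 < stdNormal x := by
  have : (0:ℝ) < Real.sqrt (2 * Real.pi) := Real.sqrt_pos.2 (by positivity)
  unfold stdNormal
  positivity

lemma stdNormal_mul (x y u v : ℝ) :
    stdNormal x * stdNormal y
      = stdNormal u * stdNormal v * Real.exp ((u^2 + v^2 - x^2 - y^2)/2) := by
  unfold stdNormal
  rw [mul_mul_mul_comm, ← Real.exp_add, mul_mul_mul_comm ((Real.sqrt (2 * Real.pi))⁻¹),
    ← Real.exp_add, mul_assoc ((Real.sqrt (2 * Real.pi))⁻¹ * (Real.sqrt (2 * Real.pi))⁻¹),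
    ← Real.exp_add]
  congr 1
  ring

lemma stdNormal_mul_le {x y u v : ℝ} (h : u^2 + v^2 ≤ x^2 + y^2) :
    stdNormal x * stdNormal y ≤ stdNormal u * stdNormal v := by
  rw [stdNormal_mul x y u v]
  have he : Real.exp ((u^2 + v^2 - x^2 - y^2)/2) ≤ 1 := Real.exp_le_one_iff.2 (by linarith)
  nlinarith [mul_pos (stdNormal_pos u) (stdNormal_pos v), Real.exp_pos ((u^2 + v^2 - x^2 - y^2)/2)]


set_option maxHeartbeats 2000000 in
lemma scalar_core (t t' α β u v a b : ℝ) (hu : 0 < u) (hv : 0 < v) (ha : 0 < a) (hb : 0 < b)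
    (hvb : v * b ≤ u * a) (hub : u * b ≤ v * a)
    (h0 : 0 < t) (hle : t ≤ t') (hab : |α| ≤ β) :
    (stdNormal (t' - α) * u + stdNormal (t' + α) * v) *
      (stdNormal (t - β) * a + stdNormal (t + β) * b) ≤
    (stdNormal (t - α) * u + stdNormal (t + α) * v) *
      (stdNormal (t' - β) * a + stdNormal (t' + β) * b) := by
  have habk := abs_le.mp hab
  set e₁ := Real.exp ((t' - t) * (α - β)) with he₁def
  set e₂ := Real.exp (-((t' - t) * (α + β))) with he₂def
  have he₁ : e₁ ≤ 1 := Real.exp_le_one_iff.2 (by nlinarith [habk.1, habk.2])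
  have he₂ : e₂ ≤ 1 := Real.exp_le_one_iff.2 (by nlinarith [habk.1, habk.2])
  have he₁pos : 0 < e₁ := Real.exp_pos _
  have he₂pos : 0 < e₂ := Real.exp_pos _
  have I1 : stdNormal (t' - α) * stdNormal (t - β)
      = stdNormal (t - α) * stdNormal (t' - β) * e₁ := by
    rw [stdNormal_mul (t' - α) (t - β) (t - α) (t' - β), he₁def]
    congr 1
    ring
  have I2 : stdNormal (t + α) * stdNormal (t' + β)
      = stdNormal (t' + α) * stdNormal (t + β) * e₁ := by
    rw [stdNormal_mul (t + α) (t' + β) (t' + α) (t + β), he₁def]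
    congr 1
    ring
  have I3 : stdNormal (t' + α) * stdNormal (t - β)
      = stdNormal (t + α) * stdNormal (t' - β) * e₂ := by
    rw [stdNormal_mul (t' + α) (t - β) (t + α) (t' - β), he₂def]
    congr 1
    ring
  have I4 : stdNormal (t - α) * stdNormal (t' + β)
      = stdNormal (t' - α) * stdNormal (t + β) * e₂ := by
    rw [stdNormal_mul (t - α) (t' + β) (t' - α) (t + β), he₂def]
    congr 1
    ring
  have hk12 : stdNormal (t' + α) * stdNormal (t + β)
      ≤ stdNormal (t - α) * stdNormal (t' - β) :=
    stdNormal_mul_le (by nlinarith [habk.1, habk.2])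
  have hk34 : stdNormal (t' - α) * stdNormal (t + β)
      ≤ stdNormal (t + α) * stdNormal (t' - β) :=
    stdNormal_mul_le (by nlinarith [habk.1, habk.2])
  set W₁ := stdNormal (t - α) * stdNormal (t' - β) * (u * a) with hW₁
  set W₂ := stdNormal (t' + α) * stdNormal (t + β) * (v * b) with hW₂
  set W₃ := stdNormal (t + α) * stdNormal (t' - β) * (v * a) with hW₃
  set W₄ := stdNormal (t' - α) * stdNormal (t + β) * (u * b) with hW₄
  have hvb0 : 0 ≤ v * b := le_of_lt (mul_pos hv hb)
  have hub0 : 0 ≤ u * b := le_of_lt (mul_pos hu hb)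
  have hk120 : 0 ≤ stdNormal (t' + α) * stdNormal (t + β) :=
    le_of_lt (mul_pos (stdNormal_pos _) (stdNormal_pos _))
  have hk340 : 0 ≤ stdNormal (t' - α) * stdNormal (t + β) :=
    le_of_lt (mul_pos (stdNormal_pos _) (stdNormal_pos _))
  have hk12' : 0 ≤ stdNormal (t - α) * stdNormal (t' - β) :=
    le_of_lt (mul_pos (stdNormal_pos _) (stdNormal_pos _))
  have hk34' : 0 ≤ stdNormal (t + α) * stdNormal (t' - β) :=
    le_of_lt (mul_pos (stdNormal_pos _) (stdNormal_pos _))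
  have hW12 : W₂ ≤ W₁ := by
    rw [hW₁, hW₂]
    exact mul_le_mul hk12 hvb hvb0 hk12'
  have hW34 : W₄ ≤ W₃ := by
    rw [hW₃, hW₄]
    exact mul_le_mul hk34 hub hub0 hk34'
  have G1 : (stdNormal (t' - α) * u + stdNormal (t' + α) * v) *
      (stdNormal (t - β) * a + stdNormal (t + β) * b)
      = e₁ * W₁ + W₄ + e₂ * W₃ + W₂ := by
    rw [hW₁, hW₂, hW₃, hW₄]
    linear_combination (u * a) * I1 + (v * a) * I3
  have G2 : (stdNormal (t - α) * u + stdNormal (t + α) * v) *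
      (stdNormal (t' - β) * a + stdNormal (t' + β) * b)
      = W₁ + e₂ * W₄ + W₃ + e₁ * W₂ := by
    rw [hW₁, hW₂, hW₃, hW₄]
    linear_combination (u * b) * I4 + (v * b) * I2
  rw [G1, G2]
  nlinarith [mul_nonneg (by linarith : (0:ℝ) ≤ 1 - e₁) (by linarith : (0:ℝ) ≤ W₁ - W₂),
    mul_nonneg (by linarith : (0:ℝ) ≤ 1 - e₂) (by linarith : (0:ℝ) ≤ W₃ - W₄)]

lemma core_ineq {K : ℕ} (k : Fin K) (z z' ν μ : Fin K → ℝ)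
    (hfix : ∀ j, j ≠ k → z j = z' j ∧ 0 < z j)
    (h0 : 0 < z k) (hle : z k ≤ z' k)
    (hν : ∀ j, |ν j| ≤ μ j) :
    ((∏ j, stdNormal (z' j - ν j)) + ∏ j, stdNormal (z' j + ν j)) *
      ((∏ j, stdNormal (z j - μ j)) + ∏ j, stdNormal (z j + μ j)) ≤
    ((∏ j, stdNormal (z j - ν j)) + ∏ j, stdNormal (z j + ν j)) *
      ((∏ j, stdNormal (z' j - μ j)) + ∏ j, stdNormal (z' j + μ j)) := by
  classical
  have hz : ∀ j ∈ Finset.univ.erase k, z j = z' j ∧ 0 < z j :=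
    fun j hj => hfix j (Finset.ne_of_mem_erase hj)
  have P1 : (∏ j, stdNormal (z' j - ν j))
      = stdNormal (z' k - ν k) * ∏ j ∈ Finset.univ.erase k, stdNormal (z j - ν j) := by
    rw [← Finset.mul_prod_erase Finset.univ (fun j => stdNormal (z' j - ν j)) (Finset.mem_univ k)]
    exact congrArg _ (Finset.prod_congr rfl fun j hj => by rw [← (hz j hj).1])
  have P2 : (∏ j, stdNormal (z' j + ν j))
      = stdNormal (z' k + ν k) * ∏ j ∈ Finset.univ.erase k, stdNormal (z j + ν j) := by
    rw [← Finset.mul_prod_erase Finset.univ (fun j => stdNormal (z' j + ν j)) (Finset.mem_univ k)]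
    exact congrArg _ (Finset.prod_congr rfl fun j hj => by rw [← (hz j hj).1])
  have P3 : (∏ j, stdNormal (z j - ν j))
      = stdNormal (z k - ν k) * ∏ j ∈ Finset.univ.erase k, stdNormal (z j - ν j) :=
    (Finset.mul_prod_erase Finset.univ (fun j => stdNormal (z j - ν j)) (Finset.mem_univ k)).symm
  have P4 : (∏ j, stdNormal (z j + ν j))
      = stdNormal (z k + ν k) * ∏ j ∈ Finset.univ.erase k, stdNormal (z j + ν j) :=
    (Finset.mul_prod_erase Finset.univ (fun j => stdNormal (z j + ν j)) (Finset.mem_univ k)).symm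
  have P5 : (∏ j, stdNormal (z j - μ j))
      = stdNormal (z k - μ k) * ∏ j ∈ Finset.univ.erase k, stdNormal (z j - μ j) :=
    (Finset.mul_prod_erase Finset.univ (fun j => stdNormal (z j - μ j)) (Finset.mem_univ k)).symm
  have P6 : (∏ j, stdNormal (z j + μ j))
      = stdNormal (z k + μ k) * ∏ j ∈ Finset.univ.erase k, stdNormal (z j + μ j) :=
    (Finset.mul_prod_erase Finset.univ (fun j => stdNormal (z j + μ j)) (Finset.mem_univ k)).symm
  have P7 : (∏ j, stdNormal (z' j - μ j))
      = stdNormal (z' k - μ k) * ∏ j ∈ Finset.univ.erase k, stdNormal (z j - μ j) := by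
    rw [← Finset.mul_prod_erase Finset.univ (fun j => stdNormal (z' j - μ j)) (Finset.mem_univ k)]
    exact congrArg _ (Finset.prod_congr rfl fun j hj => by rw [← (hz j hj).1])
  have P8 : (∏ j, stdNormal (z' j + μ j))
      = stdNormal (z' k + μ k) * ∏ j ∈ Finset.univ.erase k, stdNormal (z j + μ j) := by
    rw [← Finset.mul_prod_erase Finset.univ (fun j => stdNormal (z' j + μ j)) (Finset.mem_univ k)]
    exact congrArg _ (Finset.prod_congr rfl fun j hj => by rw [← (hz j hj).1])
  rw [P1, P2, P3, P4, P5, P6, P7, P8]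
  have hvb_ua : (∏ j ∈ Finset.univ.erase k, stdNormal (z j + ν j)) *
      (∏ j ∈ Finset.univ.erase k, stdNormal (z j + μ j)) ≤
      (∏ j ∈ Finset.univ.erase k, stdNormal (z j - ν j)) *
      (∏ j ∈ Finset.univ.erase k, stdNormal (z j - μ j)) := by
    rw [← Finset.prod_mul_distrib, ← Finset.prod_mul_distrib]
    refine Finset.prod_le_prod
      (fun j _ => le_of_lt (mul_pos (stdNormal_pos _) (stdNormal_pos _))) (fun j hj => ?_)
    have h1 := (hz j hj).2
    have h2 := abs_le.mp (hν j)
    exact stdNormal_mul_le (by nlinarith [h2.1, h2.2])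
  have hub_va : (∏ j ∈ Finset.univ.erase k, stdNormal (z j - ν j)) *
      (∏ j ∈ Finset.univ.erase k, stdNormal (z j + μ j)) ≤
      (∏ j ∈ Finset.univ.erase k, stdNormal (z j + ν j)) *
      (∏ j ∈ Finset.univ.erase k, stdNormal (z j - μ j)) := by
    rw [← Finset.prod_mul_distrib, ← Finset.prod_mul_distrib]
    refine Finset.prod_le_prod
      (fun j _ => le_of_lt (mul_pos (stdNormal_pos _) (stdNormal_pos _))) (fun j hj => ?_)
    have h1 := (hz j hj).2
    have h2 := abs_le.mp (hν j)
    exact stdNormal_mul_le (by nlinarith [h2.1, h2.2])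
  exact scalar_core (z k) (z' k) (ν k) (μ k) _ _ _ _
    (Finset.prod_pos fun j _ => stdNormal_pos _) (Finset.prod_pos fun j _ => stdNormal_pos _)
    (Finset.prod_pos fun j _ => stdNormal_pos _) (Finset.prod_pos fun j _ => stdNormal_pos _)
    hvb_ua hub_va h0 hle (hν k)

/-- Sign value encoded by a ternary digit: `0 ↦ -1`, `1 ↦ 0`, `2 ↦ 1`. -/
def sgnVal (i : Fin 3) : ℝ := (i : ℝ) - 1

/-- The non-null pattern (binary representation) of an association configuration:
`pat h k = true` iff dimension `k` is non-null. -/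
def pat {K : ℕ} (h : Fin K → Fin 3) : Fin K → Bool := fun k => h k != 1

/-- A conditionally symmetric multidimensional Gaussian mixture model (csmGmm).
Parameters are indexed by the non-null pattern `β : Fin K → Bool`, which is
equivalent to the binary representation `b ∈ {0,…,2^K - 1}`; the all-`true`
pattern corresponds to `b = 2^K - 1`. -/
structure CsmGmm (K : ℕ) where
  /-- number of mean-magnitude vectors for each binary representation -/
  M : (Fin K → Bool) → ℕ
  M_pos : ∀ β, 1 ≤ M β
  /-- mixing proportions, shared by configurations with the same binary representation -/
  pi : (β : Fin K → Bool) → Fin (M β) → ℝ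
  pi_pos : ∀ β m, 0 < pi β m
  pi_sum : ∑ h : Fin K → Fin 3, ∑ m : Fin (M (pat h)), pi (pat h) m = 1
  /-- mean magnitudes -/
  mu : (β : Fin K → Bool) → Fin (M β) → Fin K → ℝ
  mu_null : ∀ β m k, β k = false → mu β m k = 0
  mu_pos : ∀ β m k, β k = true → 0 < mu β m k
  mu_alt : ∀ β (m' : Fin (M β)) (m : Fin (M (fun _ => true))) k,
    β ≠ (fun _ => true) → β k = true → mu β m' k ≤ mu (fun _ => true) m k

namespace CsmGmm

variable {K : ℕ}

/-- The numerator `N(z)`: mixture mass over composite-null configurations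
(those with at least one null dimension, i.e. some `h k = 0`, encoded by digit `1`). -/
def N (G : CsmGmm K) (z : Fin K → ℝ) : ℝ :=
  ∑ h ∈ Finset.univ.filter (fun h : Fin K → Fin 3 => ∃ k, h k = 1),
    ∑ m : Fin (G.M (pat h)),
      G.pi (pat h) m * ∏ k, stdNormal (z k - sgnVal (h k) * G.mu (pat h) m k)

/-- The denominator `D(z)`: the full mixture density. -/
def D (G : CsmGmm K) (z : Fin K → ℝ) : ℝ :=
  ∑ h : Fin K → Fin 3,
    ∑ m : Fin (G.M (pat h)),
      G.pi (pat h) m * ∏ k, stdNormal (z k - sgnVal (h k) * G.mu (pat h) m k)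

/-- The local false discovery rate `lfdr(z) = N(z)/D(z)`. -/
def lfdr (G : CsmGmm K) (z : Fin K → ℝ) : ℝ := G.N z / G.D z

end CsmGmm

end

noncomputable section

namespace CsmGmm

variable {K : ℕ}

/-- The replication numerator `N^rep(z)`: mixture mass over the replication null
space `H₀^rep = {-1,0,1}^K \ {(1,…,1), (-1,…,-1)}` (digit `2` encodes `1` and
digit `0` encodes `-1`). -/
def Nrep (G : CsmGmm K) (z : Fin K → ℝ) : ℝ :=
  ∑ h ∈ Finset.univ.filter
      (fun h : Fin K → Fin 3 => h ≠ (fun _ => 2) ∧ h ≠ (fun _ => 0)),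
    ∑ m : Fin (G.M (pat h)),
      G.pi (pat h) m * ∏ k, stdNormal (z k - sgnVal (h k) * G.mu (pat h) m k)

/-- The replication local false discovery rate `lfdr^rep(z) = N^rep(z)/D(z)`. -/
def lfdrRep (G : CsmGmm K) (z : Fin K → ℝ) : ℝ := G.Nrep z / G.D z

end CsmGmm

end


noncomputable section

open Finset

def negDigit (i : Fin 3) : Fin 3 := ⟨2 - i.val, by omega⟩

def negc {K : ℕ} (h : Fin K → Fin 3) : Fin K → Fin 3 := fun j => negDigit (h j)

lemma negDigit_negDigit (i : Fin 3) : negDigit (negDigit i) = i := by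
  revert i
  decide

lemma sgnVal_negDigit (i : Fin 3) : sgnVal (negDigit i) = - sgnVal i := by
  fin_cases i <;> simp [sgnVal, negDigit] <;> norm_num

lemma abs_sgnVal (i : Fin 3) : |sgnVal i| ≤ 1 := by
  fin_cases i <;> simp [sgnVal] <;> norm_num

lemma pat_negc {K : ℕ} (h : Fin K → Fin 3) : pat (negc h) = pat h := by
  funext j
  have hd : ∀ i : Fin 3, (negDigit i != 1) = (i != 1) := by decide
  simpa [pat, negc] using hd (h j)

lemma negc_negc {K : ℕ} (h : Fin K → Fin 3) : negc (negc h) = h :=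
  funext fun j => negDigit_negDigit _

lemma negc_c2 {K : ℕ} : negc (fun _ : Fin K => (2 : Fin 3)) = fun _ => 0 := by
  funext j
  show negDigit 2 = 0
  decide

lemma negc_c0 {K : ℕ} : negc (fun _ : Fin K => (0 : Fin 3)) = fun _ => 2 := by
  funext j
  show negDigit 0 = 2
  decide

lemma pat_c2 {K : ℕ} : pat (fun _ : Fin K => (2 : Fin 3)) = fun _ => true := by
  funext j
  rfl

lemma pat_c0 {K : ℕ} : pat (fun _ : Fin K => (0 : Fin 3)) = fun _ => true := by
  funext j
  rfl

lemma sgnVal_two : sgnVal 2 = 1 := by norm_num [sgnVal]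

lemma sgnVal_zero : sgnVal 0 = -1 := by norm_num [sgnVal]

namespace CsmGmm

variable {K : ℕ}

lemma mu_nonneg (G : CsmGmm K) (β : Fin K → Bool) (m : Fin (G.M β)) (j : Fin K) :
    0 ≤ G.mu β m j := by
  cases hb : β j
  · exact le_of_eq (G.mu_null β m j hb).symm
  · exact (G.mu_pos β m j hb).le

lemma mu_le (G : CsmGmm K) (hM1 : G.M (fun _ => true) = 1) (β : Fin K → Bool)
    (m' : Fin (G.M β)) (m : Fin (G.M (fun _ => true))) (j : Fin K) :
    G.mu β m' j ≤ G.mu (fun _ => true) m j := by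
  by_cases hβ : β = fun _ => true
  · subst hβ
    have h1 : (m' : ℕ) < 1 := lt_of_lt_of_le m'.isLt (le_of_eq hM1)
    have h2 : (m : ℕ) < 1 := lt_of_lt_of_le m.isLt (le_of_eq hM1)
    exact le_of_eq (congrArg (fun x => G.mu (fun _ => true) x j)
      (Fin.ext (show (m' : ℕ) = (m : ℕ) by omega)))
  · cases hb : β j
    · rw [G.mu_null β m' j hb]
      exact (G.mu_pos _ m j rfl).le
    · exact G.mu_alt β m' m j hβ hb

def cterm (G : CsmGmm K) (w : Fin K → ℝ) (h : Fin K → Fin 3) : ℝ :=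
  ∑ m : Fin (G.M (pat h)),
    G.pi (pat h) m * ∏ j, stdNormal (w j - sgnVal (h j) * G.mu (pat h) m j)

lemma cterm_pos (G : CsmGmm K) (w : Fin K → ℝ) (h : Fin K → Fin 3) : 0 < cterm G w h := by
  have hM : 0 < G.M (pat h) := G.M_pos _
  haveI : Nonempty (Fin (G.M (pat h))) := ⟨⟨0, hM⟩⟩
  exact Finset.sum_pos
    (fun m _ => mul_pos (G.pi_pos _ m) (Finset.prod_pos fun j _ => stdNormal_pos _))
    Finset.univ_nonempty

lemma cterm_negc (G : CsmGmm K) (w : Fin K → ℝ) (h : Fin K → Fin 3) :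
    cterm G w (negc h) = ∑ m : Fin (G.M (pat h)),
      G.pi (pat h) m * ∏ j, stdNormal (w j + sgnVal (h j) * G.mu (pat h) m j) := by
  unfold cterm
  rw [pat_negc]
  refine Finset.sum_congr rfl fun m _ => ?_
  refine congrArg _ (Finset.prod_congr rfl fun j _ => ?_)
  rw [show negc h j = negDigit (h j) from rfl, sgnVal_negDigit, neg_mul, sub_neg_eq_add]

lemma cterm_c2 (G : CsmGmm K) (w : Fin K → ℝ) :
    cterm G (K := K) w (fun _ => 2) = ∑ m : Fin (G.M (fun _ => true)),
      G.pi (fun _ => true) m * ∏ j, stdNormal (w j - G.mu (fun _ => true) m j) := by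
  unfold cterm
  rw [pat_c2]
  refine Finset.sum_congr rfl fun m _ => ?_
  refine congrArg _ (Finset.prod_congr rfl fun j _ => ?_)
  rw [show sgnVal ((fun _ : Fin K => (2 : Fin 3)) j) = 1 from sgnVal_two, one_mul]

lemma cterm_c0 (G : CsmGmm K) (w : Fin K → ℝ) :
    cterm G (K := K) w (fun _ => 0) = ∑ m : Fin (G.M (fun _ => true)),
      G.pi (fun _ => true) m * ∏ j, stdNormal (w j + G.mu (fun _ => true) m j) := by
  unfold cterm
  rw [pat_c0]
  refine Finset.sum_congr rfl fun m _ => ?_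
  refine congrArg _ (Finset.prod_congr rfl fun j _ => ?_)
  rw [show sgnVal ((fun _ : Fin K => (0 : Fin 3)) j) = -1 from sgnVal_zero, neg_one_mul,
    sub_neg_eq_add]

end CsmGmm

end


noncomputable section

namespace CsmGmm

variable {K : ℕ}

def nullSet (K : ℕ) : Finset (Fin K → Fin 3) :=
  Finset.univ.filter (fun h => h ≠ (fun _ => 2) ∧ h ≠ (fun _ => 0))

lemma Nrep_eq_sum (G : CsmGmm K) (w : Fin K → ℝ) :
    G.Nrep w = ∑ h ∈ nullSet K, cterm G w h := rfl

lemma D_eq_sum (G : CsmGmm K) (w : Fin K → ℝ) :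
    G.D w = ∑ h : Fin K → Fin 3, cterm G w h := rfl

lemma mem_nullSet_negc : ∀ h ∈ nullSet K, negc h ∈ nullSet K := by
  intro h hh
  simp only [nullSet, Finset.mem_filter, Finset.mem_univ, true_and] at *
  constructor
  · intro hcon
    apply hh.2
    rw [← negc_negc h, hcon, negc_c2]
  · intro hcon
    apply hh.1
    rw [← negc_negc h, hcon, negc_c0]

lemma pair_le (G : CsmGmm K) (hM1 : G.M (fun _ => true) = 1)
    (k : Fin K) (z z' : Fin K → ℝ)
    (hfix : ∀ k', k' ≠ k → z k' = z' k' ∧ 0 < z k')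
    (h0 : 0 < z k) (hle : z k ≤ z' k) (h : Fin K → Fin 3) :
    cterm G z' h * (cterm G (K := K) z (fun _ => 2) + cterm G (K := K) z (fun _ => 0)) +
      cterm G z' (negc h) * (cterm G (K := K) z (fun _ => 2) + cterm G (K := K) z (fun _ => 0))
    ≤ cterm G z h * (cterm G (K := K) z' (fun _ => 2) + cterm G (K := K) z' (fun _ => 0)) +
      cterm G z (negc h) * (cterm G (K := K) z' (fun _ => 2) + cterm G (K := K) z' (fun _ => 0)) := by
  rw [cterm_negc G z' h, cterm_negc G z h, cterm_c2, cterm_c2, cterm_c0, cterm_c0]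
  unfold cterm
  rw [← Finset.sum_add_distrib, ← Finset.sum_add_distrib, ← add_mul, ← add_mul,
    ← Finset.sum_add_distrib, ← Finset.sum_add_distrib, Finset.sum_mul_sum, Finset.sum_mul_sum]
  refine Finset.sum_le_sum fun m' _ => Finset.sum_le_sum fun m _ => ?_
  have hν : ∀ j, |sgnVal (h j) * G.mu (pat h) m' j| ≤ G.mu (fun _ => true) m j := by
    intro j
    rw [abs_mul, abs_of_nonneg (mu_nonneg G (pat h) m' j)]
    calc |sgnVal (h j)| * G.mu (pat h) m' j ≤ 1 * G.mu (pat h) m' j :=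
          mul_le_mul_of_nonneg_right (abs_sgnVal _) (mu_nonneg G (pat h) m' j)
      _ = G.mu (pat h) m' j := one_mul _
      _ ≤ G.mu (fun _ => true) m j := mu_le G hM1 (pat h) m' m j
  have hcore := core_ineq k z z' (fun j => sgnVal (h j) * G.mu (pat h) m' j)
    (fun j => G.mu (fun _ => true) m j) hfix h0 hle hν
  have hpq : (0:ℝ) ≤ G.pi (pat h) m' * G.pi (fun _ => true) m :=
    (mul_pos (G.pi_pos _ _) (G.pi_pos _ _)).le
  nlinarith [mul_le_mul_of_nonneg_left hcore hpq]

end CsmGmm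

end

/-- **Theorem 3 (non-increasing part).** Under any r-csmGmm (a csmGmm with
`M_{2^K-1} = 1`), if all coordinates are positive, the replication lfdr is
non-increasing in the `k`-th coordinate. -/
theorem rcsmGmm_lfdrRep_nonincreasing_on_pos {K : ℕ} (hK : 2 ≤ K) (G : CsmGmm K)
    (hM1 : G.M (fun _ => true) = 1)
    (k : Fin K) (z z' : Fin K → ℝ)
    (hfix : ∀ k', k' ≠ k → z k' = z' k' ∧ 0 < z k')
    (h0 : 0 < z k) (hle : z k ≤ z' k) :
    G.lfdrRep z' ≤ G.lfdrRep z := by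
  classical
  have hDpos : ∀ w : Fin K → ℝ, 0 < G.D w := by
    intro w
    rw [CsmGmm.D_eq_sum]
    exact Finset.sum_pos (fun h _ => CsmGmm.cterm_pos G w h) Finset.univ_nonempty
  have hNpos : ∀ w : Fin K → ℝ, 0 ≤ G.Nrep w := fun w => by
    rw [CsmGmm.Nrep_eq_sum]
    exact Finset.sum_nonneg fun h _ => (CsmGmm.cterm_pos G w h).le
  have hne : (fun _ : Fin K => (2 : Fin 3)) ≠ (fun _ : Fin K => (0 : Fin 3)) := by
    intro hcon
    have h2 := congrFun hcon k
    exact absurd h2 (by decide)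
  have hsplit : ∀ w : Fin K → ℝ, G.D w = G.Nrep w +
      (CsmGmm.cterm G (K := K) w (fun _ => 2) + CsmGmm.cterm G (K := K) w (fun _ => 0)) := by
    intro w
    rw [CsmGmm.D_eq_sum, CsmGmm.Nrep_eq_sum, ← Finset.sum_filter_add_sum_filter_not Finset.univ
      (fun h : Fin K → Fin 3 => h ≠ (fun _ => 2) ∧ h ≠ (fun _ => 0)) (CsmGmm.cterm G w)]
    congr 1
    have hset : Finset.univ.filter
        (fun h : Fin K → Fin 3 => ¬(h ≠ (fun _ => 2) ∧ h ≠ (fun _ => 0)))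
        = {(fun _ => 2), (fun _ => 0)} := by
      ext h
      simp only [Finset.mem_filter, Finset.mem_univ, true_and, Finset.mem_insert,
        Finset.mem_singleton, not_and_or, not_not]
    rw [hset, Finset.sum_pair hne]
  have key : G.Nrep z' *
      (CsmGmm.cterm G (K := K) z (fun _ => 2) + CsmGmm.cterm G (K := K) z (fun _ => 0))
      ≤ G.Nrep z *
      (CsmGmm.cterm G (K := K) z' (fun _ => 2) + CsmGmm.cterm G (K := K) z' (fun _ => 0)) := by
    set Az := CsmGmm.cterm G (K := K) z (fun _ => 2) + CsmGmm.cterm G (K := K) z (fun _ => 0)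
      with hAzdef
    set Az' := CsmGmm.cterm G (K := K) z' (fun _ => 2) + CsmGmm.cterm G (K := K) z' (fun _ => 0)
      with hAzdef'
    have hswap : ∀ F : (Fin K → Fin 3) → ℝ,
        ∑ h ∈ CsmGmm.nullSet K, F h = ∑ h ∈ CsmGmm.nullSet K, F (negc h) := by
      intro F
      refine Finset.sum_nbij' negc negc CsmGmm.mem_nullSet_negc CsmGmm.mem_nullSet_negc
        (fun a _ => negc_negc a) (fun a _ => negc_negc a)
        (fun a _ => (congrArg F (negc_negc a)).symm)
    have hsum : ∑ h ∈ CsmGmm.nullSet K,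
        (CsmGmm.cterm G z' h * Az - CsmGmm.cterm G z h * Az') ≤ 0 := by
      have h2 : (2:ℝ) * ∑ h ∈ CsmGmm.nullSet K,
          (CsmGmm.cterm G z' h * Az - CsmGmm.cterm G z h * Az')
          = ∑ h ∈ CsmGmm.nullSet K, ((CsmGmm.cterm G z' h * Az - CsmGmm.cterm G z h * Az') +
            (CsmGmm.cterm G z' (negc h) * Az - CsmGmm.cterm G z (negc h) * Az')) := by
        rw [Finset.sum_add_distrib,
          ← hswap (fun h => CsmGmm.cterm G z' h * Az - CsmGmm.cterm G z h * Az')]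
        ring
      have h3 : ∑ h ∈ CsmGmm.nullSet K, ((CsmGmm.cterm G z' h * Az - CsmGmm.cterm G z h * Az') +
          (CsmGmm.cterm G z' (negc h) * Az - CsmGmm.cterm G z (negc h) * Az')) ≤ 0 :=
        Finset.sum_nonpos fun h _ => by
          have hp := CsmGmm.pair_le G hM1 k z z' hfix h0 hle h
          rw [← hAzdef, ← hAzdef'] at hp
          linarith
      linarith
    rw [CsmGmm.Nrep_eq_sum, CsmGmm.Nrep_eq_sum, Finset.sum_mul, Finset.sum_mul]
    rw [Finset.sum_sub_distrib] at hsum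
    linarith
  rw [show G.lfdrRep z' = G.Nrep z' / G.D z' from rfl,
    show G.lfdrRep z = G.Nrep z / G.D z from rfl,
    div_le_div_iff₀ (hDpos z') (hDpos z), hsplit z, hsplit z']
  nlinarith [key, hNpos z, hNpos z']
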